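/- Let a, b, m, n be real numbers with b > 0, m > 0, n > 0. For x ≥ 0 define z(x) = a · e^{-b x^n / n} · ∫_0^x e^{b t^n / n} · t^{m-1} dt. Then for every x ≥ 0 the series ∑_{k=0}^∞ (-1)^k · a · b^k · x^{m+kn} / (m(m+n)(m+2n)⋯(m+kn)) converges and its sum equals z(x). -/

import Mathlib

open MeasureTheory Real Finset Filter

/-!
Write `I(μ) = ∫_0^x e^{b t^n/n} t^{μ-1} dt`. Integrating `d(e^{b t^n/n} t^μ)` over `[0, x]`
gives `μ I(μ) + b I(μ + n) = e^{b x^n/n} x^μ`, so with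
`R_k = (-b)^k I(m + kn) / (m(m+n)⋯(m+(k-1)n))` the `k`-th term of the series is
`e^{-b x^n/n} (R_k - R_{k+1})`, and the partial sums telescope to `e^{-b x^n/n} (I(m) - R_K)`.
Since `I(μ) ≤ e^{b x^n/n} x^μ / μ`, both the terms and `R_k` are dominated by
`(x^m/m) (b x^n/n)^k / k!`; this gives absolute convergence and `R_k → 0`.
-/

namespace EulerSeries

noncomputable def expPowIntegral (b n x μ : ℝ) : ℝ :=
  ∫ t in Set.Ioo 0 x, exp (b * t ^ n / n) * t ^ (μ - 1)

section Integral

variable {b n x μ : ℝ}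

lemma continuous_exp_mul_rpow_div (hn : 0 < n) : Continuous fun t : ℝ => exp (b * t ^ n / n) := by
  have := Real.continuous_rpow_const hn.le
  fun_prop

lemma integrableOn_Ioo_rpow_sub_one (hx : 0 ≤ x) (hμ : 0 < μ) :
    IntegrableOn (fun t : ℝ => t ^ (μ - 1)) (Set.Ioo 0 x) :=
  (intervalIntegrable_iff_integrableOn_Ioo_of_le hx).mp
    (intervalIntegral.intervalIntegrable_rpow' (by linarith))

lemma integral_Ioo_rpow_sub_one (hx : 0 ≤ x) (hμ : 0 < μ) :
    ∫ t in Set.Ioo 0 x, t ^ (μ - 1) = x ^ μ / μ := by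
  rw [← integral_Ioc_eq_integral_Ioo, ← intervalIntegral.integral_of_le hx,
    integral_rpow (Or.inl (by linarith)), sub_add_cancel, zero_rpow hμ.ne', sub_zero]

lemma integrableOn_expPowIntegrand (hn : 0 < n) (hx : 0 ≤ x) (hμ : 0 < μ) :
    IntegrableOn (fun t => exp (b * t ^ n / n) * t ^ (μ - 1)) (Set.Ioo 0 x) :=
  (intervalIntegrable_iff_integrableOn_Ioo_of_le hx).mp <|
    (intervalIntegral.intervalIntegrable_rpow' (by linarith)).continuousOn_mul
      (continuous_exp_mul_rpow_div hn).continuousOn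

lemma expPowIntegral_nonneg : 0 ≤ expPowIntegral b n x μ :=
  setIntegral_nonneg measurableSet_Ioo fun _ ht =>
    mul_nonneg (exp_nonneg _) (rpow_nonneg ht.1.le _)

lemma expPowIntegral_le (hb : 0 ≤ b) (hn : 0 < n) (hx : 0 ≤ x) (hμ : 0 < μ) :
    expPowIntegral b n x μ ≤ exp (b * x ^ n / n) * (x ^ μ / μ) := by
  rw [← integral_Ioo_rpow_sub_one hx hμ, ← integral_const_mul]
  refine setIntegral_mono_on (integrableOn_expPowIntegrand hn hx hμ)
    ((integrableOn_Ioo_rpow_sub_one hx hμ).const_mul _) measurableSet_Ioo fun t ht => ?_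
  gcongr
  · exact rpow_nonneg ht.1.le _
  · exact ht.1.le
  · exact ht.2.le

lemma hasDerivAt_exp_mul_rpow (hn : n ≠ 0) {t : ℝ} (ht : 0 < t) :
    HasDerivAt (fun t => exp (b * t ^ n / n) * t ^ μ)
      (μ * (exp (b * t ^ n / n) * t ^ (μ - 1)) +
        b * (exp (b * t ^ n / n) * t ^ (μ + n - 1))) t := by
  have hpow : HasDerivAt (fun t : ℝ => b * t ^ n / n) (b * t ^ (n - 1)) t := by
    refine (((hasDerivAt_rpow_const (p := n) (Or.inl ht.ne')).const_mul b).div_const n).congr_deriv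
      ?_
    field_simp
  refine (hpow.exp.mul (hasDerivAt_rpow_const (p := μ) (Or.inl ht.ne'))).congr_deriv ?_
  rw [show μ + n - 1 = (n - 1) + μ by ring, rpow_add ht]
  ring

lemma expPowIntegral_recurrence (hn : 0 < n) (hx : 0 ≤ x) (hμ : 0 < μ) :
    μ * expPowIntegral b n x μ + b * expPowIntegral b n x (μ + n) =
      exp (b * x ^ n / n) * x ^ μ := by
  have hFTC := intervalIntegral.integral_eq_sub_of_hasDerivAt_of_le hx
    (((continuous_exp_mul_rpow_div hn).mul (Real.continuous_rpow_const hμ.le)).continuousOn)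
    (fun t ht => hasDerivAt_exp_mul_rpow (b := b) (μ := μ) hn.ne' ht.1)
    ((intervalIntegrable_iff_integrableOn_Ioo_of_le hx).mpr
      (((integrableOn_expPowIntegrand hn hx hμ).const_mul μ).add
        ((integrableOn_expPowIntegrand hn hx (by linarith)).const_mul b)))
  rw [intervalIntegral.integral_of_le hx, integral_Ioc_eq_integral_Ioo,
    integral_add (((integrableOn_expPowIntegrand hn hx hμ).const_mul μ))
      ((integrableOn_expPowIntegrand hn hx (by linarith)).const_mul b),
    integral_const_mul, integral_const_mul] at hFTC
  simpa only [expPowIntegral, Pi.mul_apply, zero_rpow hμ.ne', mul_zero, sub_zero] using hFTC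

end Integral

section Series

variable {b m n x : ℝ}

noncomputable def eulerTerm (b m n x : ℝ) (k : ℕ) : ℝ :=
  (-b) ^ k * x ^ (m + k * n) / ∏ j ∈ range (k + 1), (m + j * n)

noncomputable def eulerRemainder (b m n x : ℝ) (k : ℕ) : ℝ :=
  (-b) ^ k * expPowIntegral b n x (m + k * n) / ∏ j ∈ range k, (m + j * n)

lemma prod_add_mul_pos (hm : 0 < m) (hn : 0 ≤ n) (k : ℕ) : 0 < ∏ j ∈ range k, (m + j * n) :=
  prod_pos fun j _ => by positivity

lemma mul_pow_mul_factorial_le_prod (hm : 0 < m) (hn : 0 ≤ n) (k : ℕ) :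
    m * (n ^ k * k.factorial) ≤ ∏ j ∈ range (k + 1), (m + j * n) := by
  induction k with
  | zero => simp
  | succ k ih =>
    rw [prod_range_succ _ (k + 1)]
    calc m * (n ^ (k + 1) * (k + 1).factorial) = m * (n ^ k * k.factorial) * ((k + 1) * n) := by
          push_cast [Nat.factorial_succ]; ring
      _ ≤ _ := by gcongr; push_cast; linarith

lemma rpow_add_natCast_mul (hx : 0 ≤ x) (hm : 0 < m) (hn : 0 ≤ n) (k : ℕ) :
    x ^ (m + k * n) = x ^ m * (x ^ n) ^ k := by
  rw [rpow_add' hx (by positivity : 0 < m + k * n).ne', mul_comm (k : ℝ) n, rpow_mul hx,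
    rpow_natCast]

lemma abs_eulerTerm (hb : 0 ≤ b) (hm : 0 < m) (hn : 0 ≤ n) (hx : 0 ≤ x) (k : ℕ) :
    |eulerTerm b m n x k| = b ^ k * x ^ (m + k * n) / ∏ j ∈ range (k + 1), (m + j * n) := by
  rw [eulerTerm, abs_div, abs_mul, abs_pow, abs_neg, abs_of_nonneg hb,
    abs_of_nonneg (rpow_nonneg hx _), abs_of_pos (prod_add_mul_pos hm hn _)]

lemma abs_eulerTerm_le (hb : 0 ≤ b) (hm : 0 < m) (hn : 0 < n) (hx : 0 ≤ x) (k : ℕ) :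
    |eulerTerm b m n x k| ≤ x ^ m / m * ((b * x ^ n / n) ^ k / k.factorial) := by
  calc |eulerTerm b m n x k|
      ≤ b ^ k * x ^ (m + k * n) / (m * (n ^ k * k.factorial)) := by
        rw [abs_eulerTerm hb hm hn.le hx]
        gcongr
        exact mul_pow_mul_factorial_le_prod hm hn.le k
    _ = x ^ m / m * ((b * x ^ n / n) ^ k / k.factorial) := by
        rw [rpow_add_natCast_mul hx hm hn.le, div_pow, mul_pow]
        field_simp

lemma eulerRemainder_sub_succ (hm : 0 < m) (hn : 0 < n) (hx : 0 ≤ x) (k : ℕ) :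
    eulerRemainder b m n x k - eulerRemainder b m n x (k + 1) =
      exp (b * x ^ n / n) * eulerTerm b m n x k := by
  have hμ : 0 < m + k * n := by positivity
  have hrec := expPowIntegral_recurrence (b := b) hn hx hμ
  have hP := prod_add_mul_pos hm hn.le k
  rw [eulerRemainder, eulerRemainder, eulerTerm, prod_range_succ, Nat.cast_succ,
    show m + (k + 1) * n = m + k * n + n by ring, pow_succ]
  field_simp
  linear_combination (-b) ^ k * hrec

lemma abs_eulerRemainder_le (hb : 0 ≤ b) (hm : 0 < m) (hn : 0 < n) (hx : 0 ≤ x) (k : ℕ) :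
    |eulerRemainder b m n x k| ≤ exp (b * x ^ n / n) * |eulerTerm b m n x k| := by
  have hμ : 0 < m + k * n := by positivity
  have hP := prod_add_mul_pos hm hn.le k
  rw [abs_eulerTerm hb hm hn.le hx, eulerRemainder, abs_div, abs_mul, abs_pow, abs_neg,
    abs_of_nonneg hb, abs_of_nonneg expPowIntegral_nonneg, abs_of_pos hP, prod_range_succ]
  calc b ^ k * expPowIntegral b n x (m + k * n) / ∏ j ∈ range k, (m + j * n)
      ≤ b ^ k * (exp (b * x ^ n / n) * (x ^ (m + k * n) / (m + k * n))) /
          ∏ j ∈ range k, (m + j * n) := by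
        gcongr
        exact expPowIntegral_le hb hn hx hμ
    _ = _ := by field_simp

lemma hasSum_eulerTerm (hb : 0 ≤ b) (hm : 0 < m) (hn : 0 < n) (hx : 0 ≤ x) :
    HasSum (eulerTerm b m n x) (exp (-(b * x ^ n / n)) * expPowIntegral b n x m) := by
  have hsum : Summable (eulerTerm b m n x) :=
    ((summable_pow_div_factorial _).mul_left (x ^ m / m)).of_norm_bounded
      (abs_eulerTerm_le hb hm hn hx)
  have hR : Tendsto (eulerRemainder b m n x) atTop (nhds 0) := by
    refine squeeze_zero_norm (abs_eulerRemainder_le hb hm hn hx) ?_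
    simpa using hsum.abs.tendsto_atTop_zero.const_mul (exp (b * x ^ n / n))
  have hpartial : ∀ K, ∑ k ∈ range K, eulerTerm b m n x k =
      exp (-(b * x ^ n / n)) * (eulerRemainder b m n x 0 - eulerRemainder b m n x K) := by
    intro K
    rw [← sum_range_sub', mul_sum]
    refine sum_congr rfl fun k _ => ?_
    rw [eulerRemainder_sub_succ hm hn hx, ← mul_assoc, ← exp_add, neg_add_cancel, exp_zero,
      one_mul]
  rw [hsum.hasSum_iff_tendsto_nat]
  simp_rw [hpartial]
  simpa [eulerRemainder] using (hR.const_sub (eulerRemainder b m n x 0)).const_mul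
    (exp (-(b * x ^ n / n)))

end Series

end EulerSeries

open EulerSeries in
theorem euler_series_solution (a b m n : ℝ) (hb : 0 < b) (hm : 0 < m) (hn : 0 < n) :
    ∀ x : ℝ, 0 ≤ x →
      HasSum
        (fun k : ℕ =>
          (-1 : ℝ) ^ k * a * b ^ k * x ^ (m + (k : ℝ) * n) /
            ∏ j ∈ Finset.range (k + 1), (m + (j : ℝ) * n))
        (a * Real.exp (-b * x ^ n / n) *
          ∫ t in Set.Ioo (0 : ℝ) x, Real.exp (b * t ^ n / n) * t ^ (m - 1)) := by
  intro x hx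
  rw [neg_mul, neg_div, mul_assoc, ← expPowIntegral]
  refine ((hasSum_eulerTerm hb.le hm hn hx).mul_left a).congr_fun fun k => ?_
  rw [eulerTerm, neg_pow]
  ring
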